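/- Let σ : ℝ → ℝ be Lipschitz with constant L_σ and bounded on bounded sets. Fix layer widths g₁, …, g_{k+1}, a bound R > 0 on all weights and biases, and a compact set K ⊆ ℝ^{g₁}. Then there exists a constant L_h > 0 (depending on L_σ, R, the widths, and K) such that for any two parameter vectors θ¹, θ² (the collections of all weights and biases, with entries in [−R, R]) of networks h(·; θ¹), h(·; θ²) of this architecture, sup_{p ∈ K} ‖h(p; θ¹) − h(p; θ²)‖₁ ≤ L_h ‖θ¹ − θ²‖₁. -/
import Mathlib


open Finset

/-- The hidden part of a fully connected network. -/
def hiddenLayers (σ : ℝ → ℝ) (g : ℕ → ℕ)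
    (W : ∀ i : ℕ, Matrix (Fin (g (i + 1))) (Fin (g i)) ℝ)
    (b : ∀ i : ℕ, Fin (g (i + 1)) → ℝ) : ∀ j : ℕ, (Fin (g 0) → ℝ) → Fin (g j) → ℝ
  | 0, p => p
  | (j + 1), p => fun a => σ ((W j).mulVec (hiddenLayers σ g W b j p) a + b j a)

/-- A `k`-layer fully connected network, last layer affine. -/
def fcNet (σ : ℝ → ℝ) (g : ℕ → ℕ) (k : ℕ)
    (W : ∀ i : ℕ, Matrix (Fin (g (i + 1))) (Fin (g i)) ℝ)
    (b : ∀ i : ℕ, Fin (g (i + 1)) → ℝ) (p : Fin (g 0) → ℝ) : Fin (g k) → ℝ :=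
  match k with
  | 0 => p
  | (j + 1) => fun a => (W j).mulVec (hiddenLayers σ g W b j p) a + b j a

/-- ℓ¹ distance between the concatenated parameter vectors (all weights and biases of the
first `k` layers). -/
def paramDist (g : ℕ → ℕ) (k : ℕ)
    (W₁ W₂ : ∀ i : ℕ, Matrix (Fin (g (i + 1))) (Fin (g i)) ℝ)
    (b₁ b₂ : ∀ i : ℕ, Fin (g (i + 1)) → ℝ) : ℝ :=
  ∑ i ∈ range k, ((∑ a, ∑ c, |W₁ i a c - W₂ i a c|) + ∑ a, |b₁ i a - b₂ i a|)

lemma hidden_bdd (σ : ℝ → ℝ)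
    (hσbdd : ∀ M : ℝ, ∃ C : ℝ, ∀ x : ℝ, |x| ≤ M → |σ x| ≤ C)
    (g : ℕ → ℕ) (R : ℝ) (hR : 0 < R)
    (K : Set (Fin (g 0) → ℝ)) (hK : IsCompact K) (j : ℕ) :
    ∃ M : ℝ, 0 ≤ M ∧ ∀ (W : ∀ i : ℕ, Matrix (Fin (g (i + 1))) (Fin (g i)) ℝ)
      (b : ∀ i : ℕ, Fin (g (i + 1)) → ℝ),
      (∀ i a c, |W i a c| ≤ R) → (∀ i a, |b i a| ≤ R) →
      ∀ p ∈ K, ∀ a, |hiddenLayers σ g W b j p a| ≤ M := by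
  induction j with
  | zero =>
    obtain ⟨M0, hM0⟩ := hK.isBounded.exists_norm_le
    refine ⟨max M0 0, le_max_right _ _, fun W b _ _ p hp a => ?_⟩
    calc |p a| = ‖p a‖ := rfl
      _ ≤ ‖p‖ := norm_le_pi_norm p a
      _ ≤ max M0 0 := le_trans (hM0 p hp) (le_max_left _ _)
  | succ j ih =>
    obtain ⟨M, hM0, hM⟩ := ih
    obtain ⟨C, hC⟩ := hσbdd ((g j : ℝ) * (R * M) + R)
    refine ⟨max C 0, le_max_right _ _, fun W b hW hb p hp a => ?_⟩
    have hx : |(W j).mulVec (hiddenLayers σ g W b j p) a + b j a| ≤ (g j : ℝ) * (R * M) + R := by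
      refine le_trans (abs_add_le _ _) (add_le_add ?_ (hb j a))
      calc |(W j).mulVec (hiddenLayers σ g W b j p) a|
          = |∑ c, W j a c * hiddenLayers σ g W b j p c| := by
            simp [Matrix.mulVec, dotProduct]
        _ ≤ ∑ c, |W j a c * hiddenLayers σ g W b j p c| := Finset.abs_sum_le_sum_abs _ _
        _ ≤ ∑ _c : Fin (g j), R * M := by
            refine Finset.sum_le_sum fun c _ => ?_
            rw [abs_mul]
            exact mul_le_mul (hW j a c) (hM W b hW hb p hp c) (abs_nonneg _) hR.le
        _ = (g j : ℝ) * (R * M) := by simp [Finset.sum_const, mul_comm]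
    exact le_trans (hC _ hx) (le_max_left _ _)

lemma paramDist_nonneg (g : ℕ → ℕ) (k : ℕ)
    (W₁ W₂ : ∀ i : ℕ, Matrix (Fin (g (i + 1))) (Fin (g i)) ℝ)
    (b₁ b₂ : ∀ i : ℕ, Fin (g (i + 1)) → ℝ) : 0 ≤ paramDist g k W₁ W₂ b₁ b₂ := by
  refine Finset.sum_nonneg fun i _ => add_nonneg ?_ ?_ <;>
    exact Finset.sum_nonneg fun a _ => by positivity

lemma layer_sum_bound (σ : ℝ → ℝ) (g : ℕ → ℕ) (j : ℕ) (R M : ℝ) (hR : 0 < R) (hM0 : 0 ≤ M)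
    (W₁ W₂ : ∀ i : ℕ, Matrix (Fin (g (i + 1))) (Fin (g i)) ℝ)
    (b₁ b₂ : ∀ i : ℕ, Fin (g (i + 1)) → ℝ)
    (hW₁ : ∀ i a c, |W₁ i a c| ≤ R) (hW₂ : ∀ i a c, |W₂ i a c| ≤ R)
    (p : Fin (g 0) → ℝ)
    (hMb : ∀ c, |hiddenLayers σ g W₁ b₁ j p c| ≤ M) :
    ∑ a, |((W₁ j).mulVec (hiddenLayers σ g W₁ b₁ j p) a + b₁ j a) -
          ((W₂ j).mulVec (hiddenLayers σ g W₂ b₂ j p) a + b₂ j a)| ≤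
      (∑ a, ∑ c, |W₁ j a c - W₂ j a c|) * M +
      ((g (j+1) : ℝ) * (R * ∑ c, |hiddenLayers σ g W₁ b₁ j p c - hiddenLayers σ g W₂ b₂ j p c|) +
        ∑ a, |b₁ j a - b₂ j a|) := by
  set h₁ := hiddenLayers σ g W₁ b₁ j p
  set h₂ := hiddenLayers σ g W₂ b₂ j p
  have step : ∀ a, |((W₁ j).mulVec h₁ a + b₁ j a) - ((W₂ j).mulVec h₂ a + b₂ j a)| ≤
      (∑ c, (|W₁ j a c - W₂ j a c| * M + R * |h₁ c - h₂ c|)) + |b₁ j a - b₂ j a| := by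
    intro a
    have e1 : ((W₁ j).mulVec h₁ a + b₁ j a) - ((W₂ j).mulVec h₂ a + b₂ j a) =
        (∑ c, (W₁ j a c * h₁ c - W₂ j a c * h₂ c)) + (b₁ j a - b₂ j a) := by
      simp [Matrix.mulVec, dotProduct, Finset.sum_sub_distrib]
      ring
    rw [e1]
    refine le_trans (abs_add_le _ _) (add_le_add ?_ le_rfl)
    refine le_trans (Finset.abs_sum_le_sum_abs _ _) (Finset.sum_le_sum fun c _ => ?_)
    have e2 : W₁ j a c * h₁ c - W₂ j a c * h₂ c =
        (W₁ j a c - W₂ j a c) * h₁ c + W₂ j a c * (h₁ c - h₂ c) := by ring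
    rw [e2]
    refine le_trans (abs_add_le _ _) (add_le_add ?_ ?_)
    · rw [abs_mul]
      exact mul_le_mul_of_nonneg_left (hMb c) (abs_nonneg _)
    · rw [abs_mul]
      exact mul_le_mul_of_nonneg_right (hW₂ j a c) (abs_nonneg _)
  refine le_trans (Finset.sum_le_sum fun a _ => step a) (le_of_eq ?_)
  simp only [Finset.sum_add_distrib, ← Finset.sum_mul, ← Finset.mul_sum, Finset.sum_const,
    Finset.card_univ, Fintype.card_fin, nsmul_eq_mul]
  ring

lemma hidden_lip (σ : ℝ → ℝ) (Lσ : ℝ) (hLσ : 0 ≤ Lσ)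
    (hσ : ∀ x y : ℝ, |σ x - σ y| ≤ Lσ * |x - y|)
    (hσbdd : ∀ M : ℝ, ∃ C : ℝ, ∀ x : ℝ, |x| ≤ M → |σ x| ≤ C)
    (g : ℕ → ℕ) (R : ℝ) (hR : 0 < R)
    (K : Set (Fin (g 0) → ℝ)) (hK : IsCompact K) (j : ℕ) :
    ∃ L : ℝ, 0 ≤ L ∧ ∀ (W₁ W₂ : ∀ i : ℕ, Matrix (Fin (g (i + 1))) (Fin (g i)) ℝ)
      (b₁ b₂ : ∀ i : ℕ, Fin (g (i + 1)) → ℝ),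
      (∀ i a c, |W₁ i a c| ≤ R) → (∀ i a c, |W₂ i a c| ≤ R) →
      (∀ i a, |b₁ i a| ≤ R) → (∀ i a, |b₂ i a| ≤ R) →
      ∀ p ∈ K,
        ∑ a, |hiddenLayers σ g W₁ b₁ j p a - hiddenLayers σ g W₂ b₂ j p a| ≤
          L * paramDist g j W₁ W₂ b₁ b₂ := by
  induction j with
  | zero =>
    exact ⟨0, le_rfl, fun W₁ W₂ b₁ b₂ _ _ _ _ p _ => by simp [hiddenLayers, paramDist]⟩
  | succ j ih =>
    obtain ⟨M, hM0, hM⟩ := hidden_bdd σ hσbdd g R hR K hK j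
    obtain ⟨L, hL0, hL⟩ := ih
    have hn : (0:ℝ) ≤ (g (j+1) : ℝ) := Nat.cast_nonneg _
    refine ⟨Lσ * M + Lσ + Lσ * R * (g (j+1) : ℝ) * L + 1, by positivity,
      fun W₁ W₂ b₁ b₂ hW₁ hW₂ hb₁ hb₂ p hp => ?_⟩
    have hD := hL W₁ W₂ b₁ b₂ hW₁ hW₂ hb₁ hb₂ p hp
    have key := layer_sum_bound σ g j R M hR hM0 W₁ W₂ b₁ b₂ hW₁ hW₂ p
      (fun c => hM W₁ b₁ hW₁ hb₁ p hp c)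
    have hpd : paramDist g (j+1) W₁ W₂ b₁ b₂ = paramDist g j W₁ W₂ b₁ b₂ +
        ((∑ a, ∑ c, |W₁ j a c - W₂ j a c|) + ∑ a, |b₁ j a - b₂ j a|) :=
      Finset.sum_range_succ _ j
    have hstep : ∑ a, |hiddenLayers σ g W₁ b₁ (j+1) p a - hiddenLayers σ g W₂ b₂ (j+1) p a| ≤
        Lσ * ((∑ a, ∑ c, |W₁ j a c - W₂ j a c|) * M +
          ((g (j+1) : ℝ) * (R * ∑ c, |hiddenLayers σ g W₁ b₁ j p c -
              hiddenLayers σ g W₂ b₂ j p c|) + ∑ a, |b₁ j a - b₂ j a|)) := by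
      calc ∑ a, |hiddenLayers σ g W₁ b₁ (j+1) p a - hiddenLayers σ g W₂ b₂ (j+1) p a|
          ≤ ∑ a, Lσ * |((W₁ j).mulVec (hiddenLayers σ g W₁ b₁ j p) a + b₁ j a) -
              ((W₂ j).mulVec (hiddenLayers σ g W₂ b₂ j p) a + b₂ j a)| := by
            simp only [hiddenLayers]
            exact Finset.sum_le_sum fun a _ => hσ _ _
        _ = Lσ * ∑ a, |((W₁ j).mulVec (hiddenLayers σ g W₁ b₁ j p) a + b₁ j a) -
              ((W₂ j).mulVec (hiddenLayers σ g W₂ b₂ j p) a + b₂ j a)| :=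
            (Finset.mul_sum _ _ _).symm
        _ ≤ _ := mul_le_mul_of_nonneg_left key hLσ
    set A := ∑ a, ∑ c, |W₁ j a c - W₂ j a c| with hAdef
    set B := ∑ a, |b₁ j a - b₂ j a| with hBdef
    set D := ∑ c, |hiddenLayers σ g W₁ b₁ j p c - hiddenLayers σ g W₂ b₂ j p c| with hDdef
    set P := paramDist g j W₁ W₂ b₁ b₂ with hPdef
    have hA : 0 ≤ A := Finset.sum_nonneg fun a _ => Finset.sum_nonneg fun c _ => abs_nonneg _
    have hB : 0 ≤ B := Finset.sum_nonneg fun a _ => abs_nonneg _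
    have hP : 0 ≤ P := paramDist_nonneg g j W₁ W₂ b₁ b₂
    rw [hpd]
    have h1 : Lσ * R * (g (j+1) : ℝ) * D ≤ Lσ * R * (g (j+1) : ℝ) * (L * P) :=
      mul_le_mul_of_nonneg_left hD (by positivity)
    nlinarith [hstep, mul_nonneg hLσ hA, mul_nonneg hLσ hB, mul_nonneg hLσ hP,
      mul_nonneg (mul_nonneg hLσ hM0) hP, mul_nonneg (mul_nonneg hLσ hM0) hB,
      mul_nonneg (mul_nonneg (mul_nonneg (mul_nonneg hLσ hR.le) hn) hL0) hA,
      mul_nonneg (mul_nonneg (mul_nonneg (mul_nonneg hLσ hR.le) hn) hL0) hB]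

/-- A fully connected network with Lipschitz activation (bounded on bounded
sets), fixed architecture, and parameters constrained to `[−R, R]` is Lipschitz with respect to
its weights and biases (in ℓ¹ distance), uniformly over inputs in a compact set `K`. -/
theorem fcNet_lipschitz_in_parameters
    (σ : ℝ → ℝ) (Lσ : ℝ) (hLσ : 0 ≤ Lσ)
    (hσ : ∀ x y : ℝ, |σ x - σ y| ≤ Lσ * |x - y|)
    (hσbdd : ∀ M : ℝ, ∃ C : ℝ, ∀ x : ℝ, |x| ≤ M → |σ x| ≤ C)
    (g : ℕ → ℕ) (k : ℕ) (hk : 1 ≤ k) (R : ℝ) (hR : 0 < R)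
    (K : Set (Fin (g 0) → ℝ)) (hK : IsCompact K) :
    ∃ Lh : ℝ, 0 < Lh ∧
      ∀ (W₁ W₂ : ∀ i : ℕ, Matrix (Fin (g (i + 1))) (Fin (g i)) ℝ)
        (b₁ b₂ : ∀ i : ℕ, Fin (g (i + 1)) → ℝ),
        (∀ i a c, W₁ i a c ∈ Set.Icc (-R) R) → (∀ i a c, W₂ i a c ∈ Set.Icc (-R) R) →
        (∀ i a, b₁ i a ∈ Set.Icc (-R) R) → (∀ i a, b₂ i a ∈ Set.Icc (-R) R) →
        ∀ p ∈ K,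
          ∑ a, |fcNet σ g k W₁ b₁ p a - fcNet σ g k W₂ b₂ p a| ≤
            Lh * paramDist g k W₁ W₂ b₁ b₂ := by
  obtain ⟨j, rfl⟩ : ∃ j, k = j + 1 := ⟨k - 1, (Nat.succ_pred_eq_of_pos hk).symm⟩
  obtain ⟨M, hM0, hM⟩ := hidden_bdd σ hσbdd g R hR K hK j
  obtain ⟨L, hL0, hL⟩ := hidden_lip σ Lσ hLσ hσ hσbdd g R hR K hK j
  have hn : (0:ℝ) ≤ (g (j+1) : ℝ) := Nat.cast_nonneg _
  refine ⟨M + R * (g (j+1) : ℝ) * L + 1, by positivity,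
    fun W₁ W₂ b₁ b₂ hW₁ hW₂ hb₁ hb₂ p hp => ?_⟩
  have hW₁' : ∀ i a c, |W₁ i a c| ≤ R := fun i a c =>
    abs_le.mpr ⟨(hW₁ i a c).1, (hW₁ i a c).2⟩
  have hW₂' : ∀ i a c, |W₂ i a c| ≤ R := fun i a c =>
    abs_le.mpr ⟨(hW₂ i a c).1, (hW₂ i a c).2⟩
  have hb₁' : ∀ i a, |b₁ i a| ≤ R := fun i a => abs_le.mpr ⟨(hb₁ i a).1, (hb₁ i a).2⟩
  have hb₂' : ∀ i a, |b₂ i a| ≤ R := fun i a => abs_le.mpr ⟨(hb₂ i a).1, (hb₂ i a).2⟩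
  have hD := hL W₁ W₂ b₁ b₂ hW₁' hW₂' hb₁' hb₂' p hp
  have key := layer_sum_bound σ g j R M hR hM0 W₁ W₂ b₁ b₂ hW₁' hW₂' p
    (fun c => hM W₁ b₁ hW₁' hb₁' p hp c)
  have hpd : paramDist g (j+1) W₁ W₂ b₁ b₂ = paramDist g j W₁ W₂ b₁ b₂ +
      ((∑ a, ∑ c, |W₁ j a c - W₂ j a c|) + ∑ a, |b₁ j a - b₂ j a|) :=
    Finset.sum_range_succ _ j
  have hstep : ∑ a, |fcNet σ g (j+1) W₁ b₁ p a - fcNet σ g (j+1) W₂ b₂ p a| ≤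
      (∑ a, ∑ c, |W₁ j a c - W₂ j a c|) * M +
        ((g (j+1) : ℝ) * (R * ∑ c, |hiddenLayers σ g W₁ b₁ j p c -
            hiddenLayers σ g W₂ b₂ j p c|) + ∑ a, |b₁ j a - b₂ j a|) := by
    simpa only [fcNet] using key
  set A := ∑ a, ∑ c, |W₁ j a c - W₂ j a c| with hAdef
  set B := ∑ a, |b₁ j a - b₂ j a| with hBdef
  set D := ∑ c, |hiddenLayers σ g W₁ b₁ j p c - hiddenLayers σ g W₂ b₂ j p c| with hDdef
  set P := paramDist g j W₁ W₂ b₁ b₂ with hPdef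
  have hA : 0 ≤ A := Finset.sum_nonneg fun a _ => Finset.sum_nonneg fun c _ => abs_nonneg _
  have hB : 0 ≤ B := Finset.sum_nonneg fun a _ => abs_nonneg _
  have hP : 0 ≤ P := paramDist_nonneg g j W₁ W₂ b₁ b₂
  rw [hpd]
  have h1 : R * (g (j+1) : ℝ) * D ≤ R * (g (j+1) : ℝ) * (L * P) :=
    mul_le_mul_of_nonneg_left hD (by positivity)
  nlinarith [hstep, mul_nonneg hM0 hP, mul_nonneg hM0 hB,
    mul_nonneg (mul_nonneg (mul_nonneg hR.le hn) hL0) hA,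
    mul_nonneg (mul_nonneg (mul_nonneg hR.le hn) hL0) hB]
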